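/- Let R be a commutative integral domain and I ⊆ R a prime ideal. Fix a Hermite–Padé interpolation problem with data f₁,…,f_m ∈ R[[x]], degree bounds n₁,…,n_m ∈ ℕ, and order σ ∈ ℕ, considered over Frac(R) and, after coefficientwise reduction modulo I, over Frac(R/I). Let P = (p₁,…,p_m) be a normalised σ-basis of the problem over Frac(R) and Q = (q₁,…,q_m) a normalised σ-basis of the reduced problem over Frac(R/I). If defect(p_r) = defect(q_r) and the critical index of p_r equals the critical index of q_r for every r, then every p_r has all of its polynomial coefficients in the localisation R_I of R at I, and Q is the image of P under the map π : R_I → Frac(R/I) induced by the quotient R → R/I, applied to all coefficients. -/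

import Mathlib

/-!
The `r`-th member of a normalised σ-basis is the unique solution of an inhomogeneous linear
system with coefficients in `R`: the order conditions, vanishing of the coefficients beyond its
defect and, in the pivot components of the other members, from their pivot degrees on, and
pivot coefficient `1`. Uniqueness follows from the σ-basis property by a leading-term argument.
Equal defects and critical indices say that `P r` and `Q r` solve the same system over
`Frac R` and over `Frac (R ⧸ I)`. As the reduced system has a unique solution, it has a square
subsystem whose determinant `d` does not vanish mod `I`, and Cramer's rule for that subsystem
writes each coefficient of `P r` as `a / d` and the matching coefficient of `Q r` as its
reduction.
-/

open Polynomial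

/-- The term `nᵢ - deg pᵢ` entering the defect, valued `⊤` when `pᵢ = 0`
(i.e. when `deg pᵢ = -∞`). -/
def defectTerm {K : Type*} [Semiring K] (ni : ℕ) (p : K[X]) : WithTop ℤ :=
  WithBot.recBotCoe (⊤ : WithTop ℤ) (fun d : ℕ => (((ni : ℤ) - (d : ℤ) : ℤ) : WithTop ℤ)) p.degree

/-- The defect of a polynomial vector `p` with respect to the degree bounds `n`:
the minimum of `nᵢ - deg pᵢ` over all components (components with `pᵢ = 0`
contribute `⊤` and hence do not affect the minimum unless `p = 0`). -/
def defect {K : Type*} [Semiring K] {m : ℕ} (n : Fin m → ℕ) (p : Fin m → K[X]) : WithTop ℤ :=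
  Finset.univ.inf fun i => defectTerm (n i) (p i)

/-- `p` is a solution of the Hermite–Padé interpolation problem given by the
power series `f` and the order `σ`: the coefficient of `x^k` in
`p₁·f₁ + ⋯ + p_m·f_m` vanishes for all `k < σ`, i.e. `ord (p·f) ≥ σ`. -/
def IsSolution {K : Type*} [CommSemiring K] {m : ℕ} (f : Fin m → PowerSeries K) (σ : ℕ)
    (p : Fin m → K[X]) : Prop :=
  ∀ k < σ, PowerSeries.coeff k (∑ i, (p i : PowerSeries K) * f i) = 0

/-- `i` is the critical index of `p`: the least index at which the defect is attained. -/
def IsCriticalIndex {K : Type*} [Semiring K] {m : ℕ} (n : Fin m → ℕ) (p : Fin m → K[X])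
    (i : Fin m) : Prop :=
  defectTerm (n i) (p i) = defect n p ∧ ∀ j : Fin m, j < i → defectTerm (n j) (p j) ≠ defect n p

/-- `p` is normalised: its component at its critical index is monic. -/
def IsNormalisedVec {K : Type*} [Semiring K] {m : ℕ} (n : Fin m → ℕ) (p : Fin m → K[X]) : Prop :=
  ∃ i : Fin m, IsCriticalIndex n p i ∧ (p i).Monic

/-- `p` is reduced with respect to `q`: at the critical index `j` of `q` we have
`deg p_j < deg q_j`. -/
def ReducedWrt {K : Type*} [Semiring K] {m : ℕ} (n : Fin m → ℕ) (p q : Fin m → K[X]) : Prop :=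
  ∀ j : Fin m, IsCriticalIndex n q j → (p j).degree < (q j).degree

/-- A sequence of polynomial vectors is sorted if for `r < s` either the defect of `P r`
is strictly larger than that of `P s`, or the defects agree and the critical index of
`P r` is smaller than that of `P s`. -/
def IsSortedSeq {K : Type*} [Semiring K] {m : ℕ} (n : Fin m → ℕ)
    (P : Fin m → Fin m → K[X]) : Prop :=
  ∀ r s : Fin m, r < s →
    defect n (P s) < defect n (P r) ∨
      (defect n (P r) = defect n (P s) ∧
        ∀ i j : Fin m, IsCriticalIndex n (P r) i → IsCriticalIndex n (P s) j → i < j)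

/-- A sequence of polynomial vectors is normalised if it is sorted, pairwise reduced,
and all its members are normalised. -/
def IsNormalisedSeq {K : Type*} [Semiring K] {m : ℕ} (n : Fin m → ℕ)
    (P : Fin m → Fin m → K[X]) : Prop :=
  IsSortedSeq n P ∧ (∀ r s : Fin m, r ≠ s → ReducedWrt n (P r) (P s)) ∧
    ∀ r, IsNormalisedVec n (P r)

/-- `P` is a σ-basis of the Hermite–Padé interpolation problem given by `f`, `n` and `σ`:
every member is a solution, every solution `q` has a unique representation
`q = Σ_r α_r • P_r`, and in this representation `defect q ≤ defect (P r) - deg (α r)`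
(written additively as `defect q + deg (α r) ≤ defect (P r)`) whenever `α r ≠ 0`. -/
def IsSigmaBasis {K : Type*} [CommRing K] {m : ℕ} (f : Fin m → PowerSeries K)
    (n : Fin m → ℕ) (σ : ℕ) (P : Fin m → Fin m → K[X]) : Prop :=
  (∀ r, IsSolution f σ (P r)) ∧
    ∀ q : Fin m → K[X], IsSolution f σ q →
      (∃! α : Fin m → K[X], ∀ i, q i = ∑ r, α r * P r i) ∧
      ∀ α : Fin m → K[X], (∀ i, q i = ∑ r, α r * P r i) →
        ∀ r, α r ≠ 0 →
          defect n q + (((α r).natDegree : ℤ) : WithTop ℤ) ≤ defect n (P r)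

section Defect

variable {K : Type*} [Semiring K] {m : ℕ} {n : Fin m → ℕ}

theorem defectTerm_of_ne_zero (ni : ℕ) {p : K[X]} (hp : p ≠ 0) :
    defectTerm ni p = (((ni : ℤ) - p.natDegree : ℤ) : WithTop ℤ) := by
  rw [defectTerm, degree_eq_natDegree hp]
  rfl

theorem coeff_eq_zero_of_lt_defect {p : Fin m → K[X]} {i : Fin m} {t : ℕ}
    (h : (((n i : ℤ) - t : ℤ) : WithTop ℤ) < defect n p) : (p i).coeff t = 0 := by
  by_contra hne
  have hpi : p i ≠ 0 := fun h0 => hne (by simp [h0])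
  have hle : defect n p ≤ defectTerm (n i) (p i) := Finset.inf_le (Finset.mem_univ i)
  rw [defectTerm_of_ne_zero _ hpi] at hle
  have hlt := WithTop.coe_lt_coe.mp (h.trans_le hle)
  have := le_natDegree_of_ne_zero hne
  omega

theorem IsCriticalIndex.unique {p : Fin m → K[X]} {i i' : Fin m} (h : IsCriticalIndex n p i)
    (h' : IsCriticalIndex n p i') : i = i' := by
  rcases lt_trichotomy i i' with hlt | heq | hgt
  · exact absurd h.1 (h'.2 i hlt)
  · exact heq
  · exact absurd h'.1 (h.2 i' hgt)

theorem IsCriticalIndex.defect_eq {p : Fin m → K[X]} {i : Fin m} (h : IsCriticalIndex n p i)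
    (hp : p i ≠ 0) : defect n p = (((n i : ℤ) - (p i).natDegree : ℤ) : WithTop ℤ) := by
  rw [← h.1, defectTerm_of_ne_zero _ hp]

theorem IsCriticalIndex.degree_eq {p : Fin m → K[X]} {i : Fin m} {d : ℕ}
    (h : IsCriticalIndex n p i) (hd : defect n p = (((n i : ℤ) - d : ℤ) : WithTop ℤ)) :
    (p i).degree = d := by
  have hp : p i ≠ 0 := by
    intro h0
    have := h.1
    rw [hd, h0, defectTerm, degree_zero] at this
    exact WithTop.top_ne_coe this
  rw [h.defect_eq hp] at hd
  have := WithTop.coe_inj.mp hd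
  rw [degree_eq_natDegree hp, Nat.cast_inj]
  omega

theorem IsNormalisedSeq.monic {G : Fin m → Fin m → K[X]} (hG : IsNormalisedSeq n G) {s i : Fin m}
    (hi : IsCriticalIndex n (G s) i) : (G s i).Monic := by
  obtain ⟨i', hi', hmonic⟩ := hG.2.2 s
  rwa [hi'.unique hi] at hmonic

end Defect

section Constraints

variable {K : Type*} {m : ℕ} {n : Fin m → ℕ}

/-- Where the `r`-th member of a normalised σ-basis with pivot positions `(j s, D s)` vanishes:
beyond its defect (`n i - t < n (j r) - D r`, written without subtraction), and by reducedness at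
degrees `≥ D s` of the pivot component of every other member `s`. -/
def pivotZeros (n : Fin m → ℕ) (j : Fin m → Fin m) (D : Fin m → ℕ) (r i : Fin m) (t : ℕ) : Prop :=
  n i + D r < t + n (j r) ∨ ∃ s, s ≠ r ∧ j s = i ∧ D s ≤ t

structure IsConstrainedSolution [CommSemiring K] (f : Fin m → PowerSeries K) (σ : ℕ)
    (Z : Fin m → ℕ → Prop) (i₀ : Fin m) (d₀ : ℕ) (c : K) (p : Fin m → K[X]) : Prop where
  isSolution : IsSolution f σ p
  coeff_eq_zero : ∀ i t, Z i t → (p i).coeff t = 0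
  coeff_pivot : (p i₀).coeff d₀ = c

variable {f : Fin m → PowerSeries K} {σ : ℕ} {j : Fin m → Fin m} {D : Fin m → ℕ}

theorem IsNormalisedSeq.isConstrainedSolution [CommSemiring K] {G : Fin m → Fin m → K[X]}
    (hG : IsNormalisedSeq n G) (hsol : ∀ s, IsSolution f σ (G s))
    (hj : ∀ s, IsCriticalIndex n (G s) (j s))
    (hD : ∀ s, defect n (G s) = (((n (j s) : ℤ) - D s : ℤ) : WithTop ℤ)) (r : Fin m) :
    IsConstrainedSolution f σ (pivotZeros n j D r) (j r) (D r) 1 (G r) where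
  isSolution := hsol r
  coeff_eq_zero i t := by
    rintro (hlt | ⟨s, hsr, rfl, hst⟩)
    · refine coeff_eq_zero_of_lt_defect (n := n) ?_
      rw [hD r, WithTop.coe_lt_coe]
      omega
    · apply coeff_eq_zero_of_degree_lt
      calc (G r (j s)).degree < (G s (j s)).degree := hG.2.1 r s hsr.symm (j s) (hj s)
        _ = D s := (hj s).degree_eq (hD s)
        _ ≤ t := by exact_mod_cast hst
  coeff_pivot := by
    rw [← natDegree_eq_of_degree_eq_some ((hj r).degree_eq (hD r))]
    exact (hG.monic (hj r)).coeff_natDegree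

theorem IsConstrainedSolution.natDegree_le [CommSemiring K] {r : Fin m} {i₀ : Fin m} {d₀ : ℕ}
    {c : K} {p : Fin m → K[X]} (hp : IsConstrainedSolution f σ (pivotZeros n j D r) i₀ d₀ c p)
    (i : Fin m) : (p i).natDegree ≤ n i + D r - n (j r) :=
  natDegree_le_iff_coeff_eq_zero.mpr fun t ht =>
    hp.coeff_eq_zero i t (Or.inl (by omega))

theorem IsSigmaBasis.eq_zero_of_isConstrainedSolution [CommRing K] {G : Fin m → Fin m → K[X]}
    (hG : IsSigmaBasis f n σ G)
    (hGc : ∀ s, IsConstrainedSolution f σ (pivotZeros n j D s) (j s) (D s) 1 (G s))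
    {r : Fin m} {q : Fin m → K[X]}
    (hq : IsConstrainedSolution f σ (pivotZeros n j D r) (j r) (D r) 0 q) : q = 0 := by
  classical
  obtain ⟨α, hα⟩ := (hG.2 q hq.isSolution).1.exists
  suffices hα0 : α = 0 by
    funext i
    simp [hα i, hα0]
  by_contra hne
  -- For `s` maximising `(deg α s - defect (G s), defect (G s))` lexicographically, the coefficient
  -- of `q (j s)` of degree `deg α s + D s` is the leading coefficient of `α s`.
  obtain ⟨s, hs, hmax⟩ := Finset.exists_max_image {t | α t ≠ 0}
    (fun t => toLex (((α t).natDegree + D t - n (j t) : ℤ), (n (j t) - D t : ℤ)))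
    (by simpa [Finset.filter_nonempty_iff, Function.ne_iff] using hne)
  simp only [Finset.mem_filter, Finset.mem_univ, true_and, Prod.Lex.toLex_le_toLex] at hs hmax
  set N := (α s).natDegree + D s
  have hterm : ∀ t, t ≠ s → (α t * G t (j s)).coeff N = 0 := by
    intro t hts
    rw [coeff_mul]
    refine Finset.sum_eq_zero ?_
    rintro ⟨a, c⟩ hac
    rw [Finset.HasAntidiagonal.mem_antidiagonal] at hac
    by_cases ha : (α t).coeff a = 0
    · rw [ha, zero_mul]
    have hαt : α t ≠ 0 := fun h0 => ha (by simp [h0])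
    have ha' := le_natDegree_of_ne_zero ha
    suffices hc : (G t (j s)).coeff c = 0 by rw [hc, mul_zero]
    by_cases hcD : D s ≤ c
    · exact (hGc t).coeff_eq_zero _ _ (Or.inr ⟨s, Ne.symm hts, rfl, hcD⟩)
    · refine (hGc t).coeff_eq_zero _ _ (Or.inl ?_)
      rcases hmax t hαt with h | ⟨h₁, h₂⟩ <;> dsimp only at * <;> omega
  have hlead : (α s * G s (j s)).coeff N = (α s).leadingCoeff := by
    have hdeg : (G s (j s)).natDegree ≤ D s := ((hGc s).natDegree_le (j s)).trans (by omega)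
    rw [coeff_mul_add_eq_of_natDegree_le le_rfl hdeg, (hGc s).coeff_pivot, mul_one, leadingCoeff]
  have hqN : (q (j s)).coeff N = 0 := by
    by_cases hsr : s = r
    · subst hsr
      rcases Nat.eq_zero_or_pos (α s).natDegree with h0 | hpos
      · rw [show N = D s by omega, hq.coeff_pivot]
      · exact hq.coeff_eq_zero _ _ (Or.inl (by omega))
    · exact hq.coeff_eq_zero _ _ (Or.inr ⟨s, hsr, rfl, by omega⟩)
  rw [hα, finsetSum_coeff, Finset.sum_eq_single s (fun t _ => hterm t) (by simp), hlead] at hqN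
  exact hs (leadingCoeff_eq_zero.mp hqN)

end Constraints

section LinearSystem

open Classical Matrix

variable {R : Type*} [CommRing R] {m : ℕ} {B : ℕ}

def coeffVec (B : ℕ) (p : Fin m → R[X]) : Fin m × Fin (B + 1) → R :=
  fun u => (p u.1).coeff u.2

noncomputable def ofCoeffVec (B : ℕ) (x : Fin m × Fin (B + 1) → R) : Fin m → R[X] :=
  fun i => ∑ t : Fin (B + 1), monomial t (x (i, t))

theorem natDegree_ofCoeffVec_le (x : Fin m × Fin (B + 1) → R) (i : Fin m) :
    (ofCoeffVec B x i).natDegree ≤ B :=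
  natDegree_sum_le_of_forall_le _ _ fun t _ =>
    (natDegree_monomial_le _).trans (Nat.le_of_lt_succ t.2)

theorem coeffVec_ofCoeffVec (x : Fin m × Fin (B + 1) → R) : coeffVec B (ofCoeffVec B x) = x := by
  funext ⟨i, t⟩
  simp [coeffVec, ofCoeffVec, finsetSum_coeff, coeff_monomial, Fin.val_inj]

theorem coeff_coe_mul_eq_sum {p : R[X]} (hp : p.natDegree ≤ B) (g : PowerSeries R) (k : ℕ) :
    PowerSeries.coeff k ((p : PowerSeries R) * g) =
      ∑ t : Fin (B + 1), if (t : ℕ) ≤ k then PowerSeries.coeff (k - t) g * p.coeff t else 0 := by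
  conv_lhs => rw [as_sum_range_C_mul_X_pow' p (Nat.lt_succ_of_le hp)]
  rw [Fin.sum_univ_eq_sum_range
    (fun t => if t ≤ k then PowerSeries.coeff (k - t) g * p.coeff t else 0)]
  simp only [← coeToPowerSeries.ringHom_apply, map_sum, map_mul, map_pow, Finset.sum_mul]
  refine Finset.sum_congr rfl fun t _ => ?_
  rw [coeToPowerSeries.ringHom_apply, coeToPowerSeries.ringHom_apply, coe_C, coe_X, mul_assoc,
    PowerSeries.coeff_C_mul, PowerSeries.coeff_X_pow_mul', mul_ite, mul_zero, mul_comm]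

/-- Rows: the pivot coefficient, the `σ` order conditions, and the vanishing of the coefficient at
each position of `Z` (a zero row at the other positions). -/
noncomputable def hpMatrix (f : Fin m → PowerSeries R) (σ B : ℕ) (Z : Fin m → ℕ → Prop)
    (i₀ : Fin m) (d₀ : ℕ) : Matrix (Option (Fin σ ⊕ Fin m × Fin (B + 1))) (Fin m × Fin (B + 1)) R
  | none, u => if u.1 = i₀ ∧ (u.2 : ℕ) = d₀ then 1 else 0
  | some (.inl k), u => if (u.2 : ℕ) ≤ k then PowerSeries.coeff (k - u.2 : ℕ) (f u.1) else 0
  | some (.inr w), u => if Z w.1 w.2 ∧ u = w then 1 else 0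

variable {f : Fin m → PowerSeries R} {σ : ℕ} {Z : Fin m → ℕ → Prop} {i₀ : Fin m} {d₀ : ℕ}
  {p : Fin m → R[X]}

theorem hpMatrix_map {L : Type*} [CommRing L] (χ : R →+* L) :
    (hpMatrix f σ B Z i₀ d₀).map χ = hpMatrix (fun i => PowerSeries.map χ (f i)) σ B Z i₀ d₀ := by
  ext (_ | _ | _) u <;> simp [hpMatrix, apply_ite χ]

theorem hpMatrix_mulVec_none (hd₀ : d₀ ≤ B) :
    (hpMatrix f σ B Z i₀ d₀ *ᵥ coeffVec B p) none = (p i₀).coeff d₀ := by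
  rw [mulVec, dotProduct, Finset.sum_eq_single (i₀, ⟨d₀, Nat.lt_succ_of_le hd₀⟩)]
  · simp [hpMatrix, coeffVec]
  · rintro ⟨i, t⟩ _ hne
    rw [hpMatrix, if_neg, zero_mul]
    rintro ⟨rfl, ht⟩
    exact hne (by simp [← ht])
  · simp

theorem hpMatrix_mulVec_inl (hp : ∀ i, (p i).natDegree ≤ B) (k : Fin σ) :
    (hpMatrix f σ B Z i₀ d₀ *ᵥ coeffVec B p) (some (.inl k)) =
      PowerSeries.coeff k (∑ i, (p i : PowerSeries R) * f i) := by
  rw [map_sum, mulVec, dotProduct, Fintype.sum_prod_type]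
  refine Finset.sum_congr rfl fun i _ => ?_
  rw [coeff_coe_mul_eq_sum (hp i)]
  simp [hpMatrix, coeffVec, ite_mul]

theorem hpMatrix_mulVec_inr (w : Fin m × Fin (B + 1)) :
    (hpMatrix f σ B Z i₀ d₀ *ᵥ coeffVec B p) (some (.inr w)) =
      if Z w.1 w.2 then (p w.1).coeff w.2 else 0 := by
  simp [mulVec, dotProduct, hpMatrix, coeffVec, ite_and]

theorem hpMatrix_mulVec_coeffVec_eq_iff (hp : ∀ i, (p i).natDegree ≤ B) (hd₀ : d₀ ≤ B) (c : R) :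
    hpMatrix f σ B Z i₀ d₀ *ᵥ coeffVec B p = Pi.single none c ↔
      IsConstrainedSolution f σ Z i₀ d₀ c p := by
  simp only [funext_iff, Option.forall, Sum.forall, hpMatrix_mulVec_none hd₀,
    hpMatrix_mulVec_inl hp, hpMatrix_mulVec_inr, Pi.single_eq_same,
    Pi.single_eq_of_ne (Option.some_ne_none _), Prod.forall]
  constructor
  · rintro ⟨hpiv, hsol, hzero⟩
    refine ⟨fun k hk => hsol ⟨k, hk⟩, fun i t hZ => ?_, hpiv⟩
    by_cases ht : t ≤ B
    · simpa [hZ] using hzero i ⟨t, Nat.lt_succ_of_le ht⟩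
    · exact coeff_eq_zero_of_natDegree_lt ((hp i).trans_lt (not_le.mp ht))
  · rintro ⟨hsol, hzero, hpiv⟩
    refine ⟨hpiv, fun k => hsol k k.2, fun i t => ?_⟩
    split_ifs with hZ
    · exact hzero i t hZ
    · rfl

theorem IsConstrainedSolution.map_hpMatrix_mulVec {L : Type*} [CommRing L] (χ : R →+* L)
    {p : Fin m → L[X]} (hp : IsConstrainedSolution (fun i => PowerSeries.map χ (f i)) σ Z i₀ d₀ 1 p)
    (hpB : ∀ i, (p i).natDegree ≤ B) (hd₀ : d₀ ≤ B) :
    (hpMatrix f σ B Z i₀ d₀).map χ *ᵥ coeffVec B p = χ ∘ Pi.single none 1 := by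
  rw [hpMatrix_map, (hpMatrix_mulVec_coeffVec_eq_iff hpB hd₀ 1).2 hp]
  ext (_ | _) <;> simp

theorem hpMatrix_mulVec_injective (hd₀ : d₀ ≤ B)
    (huniq : ∀ q, IsConstrainedSolution f σ Z i₀ d₀ 0 q → q = 0) :
    Function.Injective (hpMatrix f σ B Z i₀ d₀).mulVec := by
  rw [← coe_mulVecLin, injective_iff_map_eq_zero]
  intro z hz
  rw [coe_mulVecLin, ← coeffVec_ofCoeffVec z, ← Pi.single_zero] at hz
  rw [← coeffVec_ofCoeffVec z,
    huniq _ ((hpMatrix_mulVec_coeffVec_eq_iff (natDegree_ofCoeffVec_le z) hd₀ 0).1 hz)]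
  rfl

end LinearSystem

section Cramer

open Matrix

variable {E U R : Type*} [Fintype U] [DecidableEq U] [CommRing R]

theorem Matrix.exists_submatrix_det_ne_zero [Fintype E] {k : Type*} [Field k] (A : Matrix E U k)
    (hA : Function.Injective A.mulVec) : ∃ g : U → E, (A.submatrix g id).det ≠ 0 := by
  have hrank : Module.finrank k (Submodule.span k (Set.range A.row)) = Fintype.card U := by
    rw [← rank_eq_finrank_span_row, rank, LinearMap.finrank_range_of_inj (by rwa [coe_mulVecLin]),
      Module.finrank_fintype_fun_eq_card]
  obtain ⟨κ, a, ha, hspan, hli⟩ := exists_linearIndependent' k A.row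
  have : Finite κ := Finite.of_injective a ha
  have : Fintype κ := Fintype.ofFinite κ
  have hcard : Fintype.card κ = Fintype.card U := by
    rw [linearIndependent_iff_card_eq_finrank_span.mp hli, Set.finrank, hspan, hrank]
  let e : U ≃ κ := Fintype.equivOfCardEq hcard.symm
  refine ⟨a ∘ e, ((isUnit_iff_isUnit_det _).mp (linearIndependent_rows_iff_isUnit.mp ?_)).ne_zero⟩
  exact hli.comp e e.injective

theorem Matrix.mulVec_mul_det_eq {L : Type*} [CommRing L] (χ : R →+* L) (S : Matrix U U R)
    {b : U → R} {w : U → L} (hw : S.map χ *ᵥ w = χ ∘ b) (u : U) :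
    w u * χ S.det = χ ((S.adjugate *ᵥ b) u) := by
  have h := congrArg ((S.map χ).adjugate *ᵥ ·) hw
  simp only [mulVec_mulVec, adjugate_mul, smul_mulVec, one_mulVec] at h
  rw [RingHom.map_mulVec, ← RingHom.mapMatrix_apply, RingHom.map_adjugate, RingHom.mapMatrix_apply,
    ← h, ← RingHom.mapMatrix_apply, ← RingHom.map_det, Pi.smul_apply, smul_eq_mul, mul_comm]

theorem Matrix.exists_fraction_of_mulVec_eq [Fintype E] {K k : Type*} [CommRing K] [Field k]
    (φ : R →+* K) (ψ : R →+* k) (A : Matrix E U R) (b : E → R) {x : U → K} {y : U → k}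
    (hx : A.map φ *ᵥ x = φ ∘ b) (hy : A.map ψ *ᵥ y = ψ ∘ b)
    (hA : Function.Injective (A.map ψ).mulVec) (u : U) :
    ∃ a c : R, ψ c ≠ 0 ∧ x u * φ c = φ a ∧ y u * ψ c = ψ a := by
  obtain ⟨g, hg⟩ := (A.map ψ).exists_submatrix_det_ne_zero hA
  refine ⟨((A.submatrix g id).adjugate *ᵥ (b ∘ g)) u, (A.submatrix g id).det, ?_,
    mulVec_mul_det_eq φ _ (funext fun v => congrFun hx (g v)) u,
    mulVec_mul_det_eq ψ _ (funext fun v => congrFun hy (g v)) u⟩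
  rwa [RingHom.map_det]

end Cramer

theorem IsConstrainedSolution.exists_fraction {R K k : Type*} [CommRing R] [CommRing K] [Field k]
    (φ : R →+* K) (ψ : R →+* k) {m : ℕ} {f : Fin m → PowerSeries R} {σ : ℕ}
    {Z : Fin m → ℕ → Prop} {i₀ : Fin m} {d₀ B : ℕ} {p : Fin m → K[X]} {q : Fin m → k[X]}
    (hp : IsConstrainedSolution (fun i => PowerSeries.map φ (f i)) σ Z i₀ d₀ 1 p)
    (hq : IsConstrainedSolution (fun i => PowerSeries.map ψ (f i)) σ Z i₀ d₀ 1 q)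
    (huniq : ∀ q', IsConstrainedSolution (fun i => PowerSeries.map ψ (f i)) σ Z i₀ d₀ 0 q' →
      q' = 0)
    (hpB : ∀ i, (p i).natDegree ≤ B) (hqB : ∀ i, (q i).natDegree ≤ B) (hd₀ : d₀ ≤ B)
    (i : Fin m) (t : ℕ) :
    ∃ a c : R, ψ c ≠ 0 ∧ (p i).coeff t * φ c = φ a ∧ (q i).coeff t * ψ c = ψ a := by
  by_cases ht : t ≤ B
  swap
  · refine ⟨0, 1, by simp, ?_, ?_⟩ <;>
      simp [coeff_eq_zero_of_natDegree_lt ((hpB i).trans_lt (not_le.mp ht)),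
        coeff_eq_zero_of_natDegree_lt ((hqB i).trans_lt (not_le.mp ht))]
  have hA : Function.Injective ((hpMatrix f σ B Z i₀ d₀).map ψ).mulVec := by
    rw [hpMatrix_map]
    exact hpMatrix_mulVec_injective hd₀ huniq
  exact (hpMatrix f σ B Z i₀ d₀).exists_fraction_of_mulVec_eq φ ψ _
    (hp.map_hpMatrix_mulVec φ hpB hd₀) (hq.map_hpMatrix_mulVec ψ hqB hd₀) hA
    (i, ⟨t, Nat.lt_succ_of_le ht⟩)

theorem normalised_sigma_basis_good_reduction_general {R : Type*} [CommRing R]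
    (I : Ideal R) [I.IsPrime] {m : ℕ}
    (f : Fin m → PowerSeries R) (n : Fin m → ℕ) (σ : ℕ)
    (P : Fin m → Fin m → (FractionRing R)[X])
    (Q : Fin m → Fin m → (FractionRing (R ⧸ I))[X])
    (hP : IsSigmaBasis
      (fun l => PowerSeries.map (algebraMap R (FractionRing R)) (f l)) n σ P)
    (hQ : IsSigmaBasis
      (fun l => PowerSeries.map
        ((algebraMap (R ⧸ I) (FractionRing (R ⧸ I))).comp (Ideal.Quotient.mk I)) (f l))
      n σ Q)
    (hPn : IsNormalisedSeq n P) (hQn : IsNormalisedSeq n Q)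
    (hdef : ∀ r, defect n (P r) = defect n (Q r))
    (hcrit : ∀ r i, IsCriticalIndex n (P r) i ↔ IsCriticalIndex n (Q r) i) :
    ∀ (r i : Fin m) (k : ℕ), ∃ a b : R, b ∉ I ∧
      ((P r i).coeff k) * algebraMap R (FractionRing R) b =
        algebraMap R (FractionRing R) a ∧
      ((Q r i).coeff k) *
          algebraMap (R ⧸ I) (FractionRing (R ⧸ I)) (Ideal.Quotient.mk I b) =
        algebraMap (R ⧸ I) (FractionRing (R ⧸ I)) (Ideal.Quotient.mk I a) := by
  intro r i k
  choose j hjP using fun s => (hPn.2.2 s).imp fun _ h => h.1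
  have hjQ s : IsCriticalIndex n (Q s) (j s) := (hcrit s (j s)).1 (hjP s)
  set D : Fin m → ℕ := fun s => (Q s (j s)).natDegree
  have hDQ s : defect n (Q s) = (((n (j s) : ℤ) - D s : ℤ) : WithTop ℤ) :=
    (hjQ s).defect_eq (hQn.monic (hjQ s)).ne_zero
  have hPc := hPn.isConstrainedSolution hP.1 hjP fun s => (hdef s).trans (hDQ s)
  have hQc := hQn.isConstrainedSolution hQ.1 hjQ hDQ
  have hbound i : n i + D r - n (j r) ≤ Finset.univ.sup n + D r :=
    (Nat.sub_le _ _).trans (Nat.add_le_add_right (Finset.le_sup (Finset.mem_univ i)) _)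
  obtain ⟨a, b, hb, hPab, hQab⟩ := (hPc r).exists_fraction _ _ (hQc r)
    (fun q hq => hQ.eq_zero_of_isConstrainedSolution hQc hq)
    (fun i => ((hPc r).natDegree_le i).trans (hbound i))
    (fun i => ((hQc r).natDegree_le i).trans (hbound i)) (Nat.le_add_left _ _) i k
  refine ⟨a, b, fun hbI => hb ?_, hPab, hQab⟩
  simp [Ideal.Quotient.eq_zero_iff_mem.2 hbI]

/-- **Detecting good reduction of normalised σ-bases.**  Let `R` be a commutative
integral domain and `I ⊆ R` a prime ideal.  Consider a Hermite–Padé interpolation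
problem with data `f₁, …, f_m ∈ R[[x]]`, degree bounds `n` and order `σ`, regarded
over `Frac R` as well as, after coefficientwise reduction modulo `I`, over
`Frac (R ⧸ I)`.  Let `P` be a normalised σ-basis over `Frac R` and `Q` a normalised
σ-basis of the reduced problem over `Frac (R ⧸ I)`.  If `defect (P r) = defect (Q r)`
and the critical indices of `P r` and `Q r` agree for every `r`, then every polynomial
coefficient `c` of `P` lies in the localisation `R_I` of `R` at `I` — i.e. `c = a / b`
with `a ∈ R`, `b ∉ I` — and `Q` is obtained from `P` by applying to every coefficient
the map `π : R_I → Frac (R ⧸ I)`, `a / b ↦ (a mod I) / (b mod I)`, induced by the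
quotient map `R → R ⧸ I`. -/
theorem normalised_sigma_basis_good_reduction {R : Type*} [CommRing R] [IsDomain R]
    (I : Ideal R) [I.IsPrime] {m : ℕ}
    (f : Fin m → PowerSeries R) (n : Fin m → ℕ) (σ : ℕ)
    (P : Fin m → Fin m → (FractionRing R)[X])
    (Q : Fin m → Fin m → (FractionRing (R ⧸ I))[X])
    (hP0 : ∀ r, P r ≠ 0) (hQ0 : ∀ r, Q r ≠ 0)
    (hP : IsSigmaBasis
      (fun l => PowerSeries.map (algebraMap R (FractionRing R)) (f l)) n σ P)
    (hQ : IsSigmaBasis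
      (fun l => PowerSeries.map
        ((algebraMap (R ⧸ I) (FractionRing (R ⧸ I))).comp (Ideal.Quotient.mk I)) (f l))
      n σ Q)
    (hPn : IsNormalisedSeq n P) (hQn : IsNormalisedSeq n Q)
    (hdef : ∀ r, defect n (P r) = defect n (Q r))
    (hcrit : ∀ r i, IsCriticalIndex n (P r) i ↔ IsCriticalIndex n (Q r) i) :
    ∀ (r i : Fin m) (k : ℕ), ∃ a b : R, b ∉ I ∧
      ((P r i).coeff k) * algebraMap R (FractionRing R) b =
        algebraMap R (FractionRing R) a ∧
      ((Q r i).coeff k) *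
          algebraMap (R ⧸ I) (FractionRing (R ⧸ I)) (Ideal.Quotient.mk I b) =
        algebraMap (R ⧸ I) (FractionRing (R ⧸ I)) (Ideal.Quotient.mk I a) :=
  normalised_sigma_basis_good_reduction_general I f n σ P Q hP hQ hPn hQn hdef hcrit
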